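/- Let B, β, P, σ² and h be positive real constants, let K ⊂ ℝ² be a compact measurable set, and let ρ : ℝ² → ℝ be a continuous nonnegative function. For u, x ∈ ℝ² define ω(u, x) = 1 / ( B · log(1 + βP/(σ²(‖u − x‖² + h²))) / log 2 ). Then the function F : (ℝ²)^M → ℝ defined by F(u_1, …, u_M) = ∫_K ρ(x) · min_{1≤m≤M} ω(u_m, x) dx is continuously differentiable at every point (u_1, …, u_M) whose components are pairwise distinct. -/

import Mathlib

/-!
Once the agents are distinct, the set of points equidistant from two of them is a finite union
of perpendicular bisectors, hence Lebesgue-null. Off it, every x has a unique nearest agent m,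
which stays the nearest one for all configurations close to U; since ω(u, x) increases with
‖u - x‖, the integrand ρ(x) · min_m ω(u_m, x) then coincides near U with ρ(x) · ω(u_m, x). So the
integrand is differentiable in u for almost every x, with derivative supported on the Voronoi
cell of m, and it is uniformly Lipschitz near U: differentiation under the integral sign gives
the derivative, and dominated convergence shows that it is continuous on the open set of
injective configurations.
-/

open MeasureTheory Metric Filter Topology Set

section FiniteInf

variable {ι X : Type*} [Finite ι] [Nonempty ι]

theorem continuous_ciInf_apply [TopologicalSpace X] {f : ι → X → ℝ}
    (hf : ∀ i, Continuous (f i)) : Continuous fun x => ⨅ i, f i x := by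
  have := Fintype.ofFinite ι
  simpa only [Finset.inf'_univ_eq_ciInf] using
    Continuous.finset_inf'_apply Finset.univ_nonempty fun i _ => hf i

theorem abs_ciInf_sub_ciInf_le {a b : ι → ℝ} {C : ℝ} (h : ∀ i, |a i - b i| ≤ C) :
    |(⨅ i, a i) - ⨅ i, b i| ≤ C := by
  obtain ⟨i, hi⟩ := exists_eq_ciInf_of_finite (f := a)
  obtain ⟨j, hj⟩ := exists_eq_ciInf_of_finite (f := b)
  have hai : (⨅ i, a i) ≤ a j := ciInf_le (finite_range a).bddBelow j
  have hbi : (⨅ i, b i) ≤ b i := ciInf_le (finite_range b).bddBelow i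
  rw [abs_sub_le_iff]
  constructor
  · linarith [le_abs_self (a j - b j), h j]
  · linarith [neg_abs_le (a i - b i), h i]

end FiniteInf

theorem ContinuousLinearMap.norm_comp_proj_le {ι E F : Type*} [Fintype ι]
    [SeminormedAddCommGroup E] [NormedSpace ℝ E] [SeminormedAddCommGroup F] [NormedSpace ℝ F]
    (f : E →L[ℝ] F) (i : ι) : ‖f.comp (ContinuousLinearMap.proj i : (ι → E) →L[ℝ] E)‖ ≤ ‖f‖ :=
  opNorm_le_bound _ (norm_nonneg f) fun u =>
    (f.le_opNorm _).trans (mul_le_mul_of_nonneg_left (norm_le_pi_norm u i) (norm_nonneg f))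

theorem MeasureTheory.Measure.addHaar_setOf_norm_sub_eq {E : Type*} [NormedAddCommGroup E]
    [InnerProductSpace ℝ E] [FiniteDimensional ℝ E] [MeasurableSpace E] [BorelSpace E]
    (μ : Measure E) [μ.IsAddHaarMeasure] {p q : E} (hpq : p ≠ q) :
    μ {x | ‖p - x‖ = ‖q - x‖} = 0 := by
  have : {x | ‖p - x‖ = ‖q - x‖} = (AffineSubspace.perpBisector p q : Set E) := by
    ext x
    simp only [mem_ofPred_eq, SetLike.mem_coe, AffineSubspace.mem_perpBisector_iff_dist_eq',
      dist_eq_norm]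
  rw [this]
  exact Measure.addHaar_affineSubspace μ _ (by simpa using hpq)

theorem isOpen_setOf_injective {ι X : Type*} [Finite ι] [TopologicalSpace X] [T2Space X] :
    IsOpen {u : ι → X | Function.Injective u} := by
  have : {u : ι → X | Function.Injective u} = ⋂ i, ⋂ j, ⋂ (_ : i ≠ j), {u | u i ≠ u j} := by
    ext u
    simp only [mem_iInter, mem_ofPred_eq]
    exact ⟨fun hu i j hij => hu.ne hij, fun h i j hij => by_contra fun hne => h i j hne hij⟩
  rw [this]
  exact isOpen_iInter_of_finite fun i => isOpen_iInter_of_finite fun j =>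
    isOpen_iInter_of_finite fun _ => isOpen_ne_fun (continuous_apply i) (continuous_apply j)

section Voronoi

variable {ι E : Type*} [NormedAddCommGroup E]

def voronoiCell (u : ι → E) (m : ι) : Set E :=
  {x | ∀ m' ≠ m, ‖u m - x‖ < ‖u m' - x‖}

theorem isOpen_setOf_mem_voronoiCell [Finite ι] (m : ι) :
    IsOpen {p : (ι → E) × E | p.2 ∈ voronoiCell p.1 m} := by
  have : {p : (ι → E) × E | p.2 ∈ voronoiCell p.1 m} =
      ⋂ m', ⋂ (_ : m' ≠ m), {p | ‖p.1 m - p.2‖ < ‖p.1 m' - p.2‖} := by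
    ext; simp [voronoiCell]
  rw [this]
  exact isOpen_iInter_of_finite fun m' => isOpen_iInter_of_finite fun _ =>
    isOpen_lt (by fun_prop) (by fun_prop)

theorem isOpen_voronoiCell [Finite ι] (u : ι → E) (m : ι) : IsOpen (voronoiCell u m) :=
  (isOpen_setOf_mem_voronoiCell m).preimage (by fun_prop : Continuous fun x : E => (u, x))

theorem eventually_mem_voronoiCell [Finite ι] {u : ι → E} {m : ι} {x : E}
    (hx : x ∈ voronoiCell u m) : ∀ᶠ v in 𝓝 u, x ∈ voronoiCell v m :=
  ((isOpen_setOf_mem_voronoiCell m).preimage (by fun_prop : Continuous fun v : ι → E => (v, x))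
    ).mem_nhds hx

theorem ciInf_eq_of_mem_voronoiCell [Finite ι] {ψ : E → ℝ}
    (hmono : ∀ w w' : E, ‖w‖ ≤ ‖w'‖ → ψ w ≤ ψ w') {u : ι → E} {m : ι} {x : E}
    (hx : x ∈ voronoiCell u m) : ⨅ m', ψ (u m' - x) = ψ (u m - x) := by
  have : Nonempty ι := ⟨m⟩
  refine le_antisymm (ciInf_le (finite_range _).bddBelow m) (le_ciInf fun m' => ?_)
  rcases eq_or_ne m' m with rfl | hm'
  · rfl
  · exact hmono _ _ (hx m' hm').le

theorem ae_exists_mem_voronoiCell [Finite ι] [Nonempty ι] [InnerProductSpace ℝ E]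
    [FiniteDimensional ℝ E] [MeasurableSpace E] [BorelSpace E] (μ : Measure E)
    [μ.IsAddHaarMeasure] {u : ι → E} (hu : Function.Injective u) :
    ∀ᵐ x ∂μ, ∃ m, x ∈ voronoiCell u m := by
  have hties : ∀ᵐ x ∂μ, ∀ m m', m ≠ m' → ‖u m - x‖ ≠ ‖u m' - x‖ := by
    simp only [ae_all_iff]
    exact fun m m' hmm' =>
      measure_eq_zero_iff_ae_notMem.mp (Measure.addHaar_setOf_norm_sub_eq μ (hu.ne hmm'))
  filter_upwards [hties] with x hx
  obtain ⟨m, hm⟩ := Finite.exists_min fun m => ‖u m - x‖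
  exact ⟨m, fun m' hm' => (hm m').lt_of_ne (hx m m' hm'.symm)⟩

end Voronoi

section Density

variable {ι E : Type*} [Fintype ι] [NormedAddCommGroup E] [NormedSpace ℝ E]

noncomputable def voronoiFDerivDensity (ψ ρ : E → ℝ) (u : ι → E) (x : E) :
    (ι → E) →L[ℝ] ℝ :=
  ∑ m, (voronoiCell u m).indicator
    (fun y => ρ y • (fderiv ℝ ψ (u m - y)).comp (ContinuousLinearMap.proj m)) x

variable {ψ ρ : E → ℝ}

theorem voronoiFDerivDensity_of_mem {u : ι → E} {m : ι} {x : E} (hx : x ∈ voronoiCell u m) :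
    voronoiFDerivDensity ψ ρ u x =
      ρ x • (fderiv ℝ ψ (u m - x)).comp (ContinuousLinearMap.proj m) := by
  rw [voronoiFDerivDensity, Finset.sum_eq_single_of_mem m (Finset.mem_univ m),
    indicator_of_mem hx]
  intro m' _ hm'
  exact indicator_of_notMem
    (fun hx' : x ∈ voronoiCell u m' => (hx m' hm').asymm (hx' m hm'.symm)) _

theorem norm_voronoiFDerivDensity_le {u : ι → E} {x : E} {C : ℝ}
    (hC : ∀ m, ‖fderiv ℝ ψ (u m - x)‖ ≤ C) :
    ‖voronoiFDerivDensity ψ ρ u x‖ ≤ Fintype.card ι * (‖ρ x‖ * C) :=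
  calc ‖voronoiFDerivDensity ψ ρ u x‖ ≤ ∑ _m : ι, ‖ρ x‖ * C := by
        refine (norm_sum_le Finset.univ _).trans (Finset.sum_le_sum fun m _ => ?_)
        refine (norm_indicator_le_norm_self _ _).trans ?_
        rw [norm_smul]
        exact mul_le_mul_of_nonneg_left
          (((fderiv ℝ ψ (u m - x)).norm_comp_proj_le m).trans (hC m)) (norm_nonneg _)
    _ = Fintype.card ι * (‖ρ x‖ * C) := by
        rw [Finset.sum_const, Finset.card_univ, nsmul_eq_mul]

theorem aestronglyMeasurable_voronoiFDerivDensity [SecondCountableTopology E] [MeasurableSpace E]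
    [BorelSpace E] {μ : Measure E} (hρ : AEStronglyMeasurable ρ μ) (hψ' : Continuous (fderiv ℝ ψ))
    (u : ι → E) : AEStronglyMeasurable (voronoiFDerivDensity ψ ρ u) μ :=
  Finset.aestronglyMeasurable_fun_sum _ fun m _ =>
    (hρ.smul ((hψ'.comp (by fun_prop)).clm_comp continuous_const).aestronglyMeasurable).indicator
      (isOpen_voronoiCell u m).measurableSet

theorem hasFDerivAt_mul_ciInf_of_mem_voronoiCell (hψd : Differentiable ℝ ψ)
    (hmono : ∀ w w' : E, ‖w‖ ≤ ‖w'‖ → ψ w ≤ ψ w') {u : ι → E} {m : ι} {x : E}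
    (hx : x ∈ voronoiCell u m) :
    HasFDerivAt (fun v : ι → E => ρ x * ⨅ m', ψ (v m' - x)) (voronoiFDerivDensity ψ ρ u x) u := by
  have hlocal : (fun v : ι → E => ρ x * ⨅ m', ψ (v m' - x)) =ᶠ[𝓝 u]
      fun v => ρ x * ψ (v m - x) :=
    (eventually_mem_voronoiCell hx).mono fun v hv =>
      congrArg (ρ x * ·) (ciInf_eq_of_mem_voronoiCell hmono hv)
  rw [voronoiFDerivDensity_of_mem hx]
  refine HasFDerivAt.congr_of_eventuallyEq ?_ hlocal
  exact ((hψd _).hasFDerivAt.comp u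
    ((ContinuousLinearMap.proj m : (ι → E) →L[ℝ] E).hasFDerivAt.sub_const x)).const_mul (ρ x)

theorem continuousAt_voronoiFDerivDensity_of_mem (hψ' : Continuous (fderiv ℝ ψ)) {u : ι → E}
    {m : ι} {x : E} (hx : x ∈ voronoiCell u m) :
    ContinuousAt (fun v => voronoiFDerivDensity ψ ρ v x) u := by
  have hcell : Continuous fun v : ι → E =>
      ρ x • (fderiv ℝ ψ (v m - x)).comp (ContinuousLinearMap.proj m : (ι → E) →L[ℝ] E) := by
    fun_prop
  exact hcell.continuousAt.congr <|
    (eventually_mem_voronoiCell hx).mono fun v hv => (voronoiFDerivDensity_of_mem hv).symm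

theorem exists_norm_fderiv_sub_le [ProperSpace E] (hψ' : Continuous (fderiv ℝ ψ)) {K : Set E}
    (hK : IsCompact K) (u₀ : ι → E) :
    ∃ C, ∀ v ∈ ball u₀ 1, ∀ x ∈ K, ∀ m, ‖fderiv ℝ ψ (v m - x)‖ ≤ C := by
  obtain ⟨R, hR⟩ := hK.isBounded.subset_closedBall 0
  obtain ⟨C, hC⟩ := (isCompact_closedBall (0 : E) (‖u₀‖ + 1 + R)).exists_bound_of_continuousOn
    hψ'.continuousOn
  refine ⟨C, fun v hv x hx m => hC _ (mem_closedBall_zero_iff.mpr ?_)⟩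
  have hv : ‖v‖ ≤ ‖u₀‖ + 1 := by
    linarith [norm_sub_norm_le v u₀, mem_ball_iff_norm.mp hv]
  calc ‖v m - x‖ ≤ ‖v‖ + ‖x‖ := (norm_sub_le _ _).trans (by gcongr; exact norm_le_pi_norm v m)
    _ ≤ ‖u₀‖ + 1 + R := add_le_add hv (mem_closedBall_zero_iff.mp (hR hx))

theorem abs_ciInf_sub_ciInf_le_of_norm_fderiv_le [Nonempty ι] (hψd : Differentiable ℝ ψ)
    {u₀ : ι → E} {x : E} {C : ℝ} (hC : ∀ v ∈ ball u₀ 1, ∀ m, ‖fderiv ℝ ψ (v m - x)‖ ≤ C)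
    {v : ι → E} (hv : v ∈ ball u₀ 1) :
    |(⨅ m, ψ (v m - x)) - ⨅ m, ψ (u₀ m - x)| ≤ C * ‖v - u₀‖ := by
  refine abs_ciInf_sub_ciInf_le fun m => ?_
  have hderiv : ∀ w ∈ ball u₀ 1, HasFDerivWithinAt (fun v : ι → E => ψ (v m - x))
      ((fderiv ℝ ψ (w m - x)).comp (ContinuousLinearMap.proj m)) (ball u₀ 1) w :=
    fun w _ => ((hψd _).hasFDerivAt.comp w
      ((ContinuousLinearMap.proj m : (ι → E) →L[ℝ] E).hasFDerivAt.sub_const x)).hasFDerivWithinAt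
  exact (convex_ball u₀ 1).norm_image_sub_le_of_norm_hasFDerivWithin_le hderiv
    (fun w hw => ((fderiv ℝ ψ _).norm_comp_proj_le m).trans (hC w hw m))
    (mem_ball_self one_pos) hv

end Density

section LocationalCost

variable {ι E : Type*} [Fintype ι] [NormedAddCommGroup E] [InnerProductSpace ℝ E]
  [FiniteDimensional ℝ E] [MeasurableSpace E] [BorelSpace E] {μ : Measure E}
  [μ.IsAddHaarMeasure] {ψ ρ : E → ℝ} {K : Set E} {u₀ : ι → E}

theorem hasFDerivAt_integral_mul_ciInf [Nonempty ι] (hψ : ContDiff ℝ 1 ψ)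
    (hmono : ∀ w w' : E, ‖w‖ ≤ ‖w'‖ → ψ w ≤ ψ w') (hρ : IntegrableOn ρ K μ) (hK : IsCompact K)
    (hu₀ : Function.Injective u₀) :
    HasFDerivAt (fun v : ι → E => ∫ x in K, ρ x * ⨅ m, ψ (v m - x) ∂μ)
      (∫ x in K, voronoiFDerivDensity ψ ρ u₀ x ∂μ) u₀ := by
  have hψd : Differentiable ℝ ψ := hψ.differentiable one_ne_zero
  have hψ' : Continuous (fderiv ℝ ψ) := hψ.continuous_fderiv one_ne_zero
  have hcont (v : ι → E) : Continuous fun x => ⨅ m, ψ (v m - x) :=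
    continuous_ciInf_apply fun m => hψd.continuous.comp (by fun_prop)
  obtain ⟨C, hC⟩ := exists_norm_fderiv_sub_le hψ' hK u₀
  have hmeas : ∀ v ∈ ball u₀ 1, AEStronglyMeasurable (fun x => ρ x * ⨅ m, ψ (v m - x))
      (μ.restrict K) :=
    fun v _ => hρ.aestronglyMeasurable.mul (hcont v).aestronglyMeasurable
  have hint : IntegrableOn (fun x => ρ x * ⨅ m, ψ (u₀ m - x)) K μ :=
    hρ.mul_continuousOn (hcont u₀).continuousOn hK
  have hlip : ∀ᵐ x ∂μ.restrict K, ∀ v ∈ ball u₀ 1,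
      ‖ρ x * (⨅ m, ψ (v m - x)) - ρ x * ⨅ m, ψ (u₀ m - x)‖ ≤ ‖ρ x‖ * C * ‖v - u₀‖ := by
    filter_upwards [ae_restrict_mem hK.measurableSet] with x hx v hv
    rw [← mul_sub, norm_mul, mul_assoc]
    exact mul_le_mul_of_nonneg_left
      (abs_ciInf_sub_ciInf_le_of_norm_fderiv_le hψd (fun w hw => hC w hw x hx) hv) (norm_nonneg _)
  have hderiv : ∀ᵐ x ∂μ.restrict K, HasFDerivAt (fun v : ι → E => ρ x * ⨅ m, ψ (v m - x))
      (voronoiFDerivDensity ψ ρ u₀ x) u₀ := by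
    filter_upwards [ae_restrict_of_ae (ae_exists_mem_voronoiCell μ hu₀)] with x ⟨m, hx⟩
    exact hasFDerivAt_mul_ciInf_of_mem_voronoiCell hψd hmono hx
  exact (hasFDerivAt_integral_of_dominated_loc_of_lip' (ball_mem_nhds u₀ one_pos) hmeas hint
    (aestronglyMeasurable_voronoiFDerivDensity hρ.aestronglyMeasurable hψ' u₀) hlip
    (hρ.norm.mul_const C) hderiv).2

theorem continuousAt_integral_voronoiFDerivDensity [Nonempty ι]
    (hψ' : Continuous (fderiv ℝ ψ)) (hρ : IntegrableOn ρ K μ) (hK : IsCompact K)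
    (hu₀ : Function.Injective u₀) :
    ContinuousAt (fun v : ι → E => ∫ x in K, voronoiFDerivDensity ψ ρ v x ∂μ) u₀ := by
  obtain ⟨C, hC⟩ := exists_norm_fderiv_sub_le hψ' hK u₀
  refine continuousAt_of_dominated (bound := fun x => Fintype.card ι * (‖ρ x‖ * C))
    (.of_forall fun v => aestronglyMeasurable_voronoiFDerivDensity hρ.aestronglyMeasurable hψ' v)
    ?_ ((hρ.norm.mul_const C).const_mul _) ?_
  · filter_upwards [ball_mem_nhds u₀ one_pos] with v hv
    filter_upwards [ae_restrict_mem hK.measurableSet] with x hx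
    exact norm_voronoiFDerivDensity_le (hC v hv x hx)
  · filter_upwards [ae_restrict_of_ae (ae_exists_mem_voronoiCell μ hu₀)] with x ⟨m, hx⟩
    exact continuousAt_voronoiFDerivDensity_of_mem hψ' hx

theorem contDiffAt_integral_mul_ciInf (hψ : ContDiff ℝ 1 ψ)
    (hmono : ∀ w w' : E, ‖w‖ ≤ ‖w'‖ → ψ w ≤ ψ w') (hρ : IntegrableOn ρ K μ) (hK : IsCompact K)
    (hu₀ : Function.Injective u₀) :
    ContDiffAt ℝ 1 (fun v : ι → E => ∫ x in K, ρ x * ⨅ m, ψ (v m - x) ∂μ) u₀ := by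
  cases isEmpty_or_nonempty ι
  -- with no agents the cost is identically `0`, the junk value of an empty real `⨅`
  · simp only [Real.iInf_of_isEmpty, mul_zero, integral_zero]
    exact contDiffAt_const
  rw [contDiffAt_one_iff]
  exact ⟨fun v : ι → E => ∫ x in K, voronoiFDerivDensity ψ ρ v x ∂μ, {v | Function.Injective v},
    isOpen_setOf_injective.mem_nhds hu₀,
    fun v hv => (continuousAt_integral_voronoiFDerivDensity
      (hψ.continuous_fderiv one_ne_zero) hρ hK hv).continuousWithinAt,
    fun v hv => hasFDerivAt_integral_mul_ciInf hψ hmono hρ hK hv⟩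

end LocationalCost

section PerBitCost

variable {E : Type*} [NormedAddCommGroup E] {B β P σsq h : ℝ}

noncomputable def transmissionRate (B β P σsq h : ℝ) (w : E) : ℝ :=
  B * Real.log (1 + β * P / (σsq * (‖w‖ ^ 2 + h ^ 2))) / Real.log 2

theorem transmissionRate_pos (hB : 0 < B) (hβ : 0 < β) (hP : 0 < P) (hσ : 0 < σsq)
    (hh : h ≠ 0) (w : E) : 0 < transmissionRate B β P σsq h w := by
  have hsnr : 0 < β * P / (σsq * (‖w‖ ^ 2 + h ^ 2)) := by positivity
  have := Real.log_pos (lt_add_of_pos_right 1 hsnr)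
  have := Real.log_pos one_lt_two
  unfold transmissionRate
  positivity

theorem transmissionRate_le_of_norm_le (hB : 0 < B) (hβ : 0 < β) (hP : 0 < P) (hσ : 0 < σsq)
    (hh : h ≠ 0) {w w' : E} (hw : ‖w‖ ≤ ‖w'‖) :
    transmissionRate B β P σsq h w' ≤ transmissionRate B β P σsq h w := by
  have hsnr : 0 < β * P / (σsq * (‖w'‖ ^ 2 + h ^ 2)) := by positivity
  have := Real.log_pos one_lt_two
  unfold transmissionRate
  gcongr

theorem contDiff_transmissionRate [InnerProductSpace ℝ E] {n : WithTop ℕ∞} (hβ : 0 < β)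
    (hP : 0 < P) (hσ : 0 < σsq) (hh : h ≠ 0) :
    ContDiff ℝ n (transmissionRate B β P σsq h : E → ℝ) := by
  have hden : ∀ w : E, σsq * (‖w‖ ^ 2 + h ^ 2) ≠ 0 := fun w => by positivity
  have hsnr : ∀ w : E, 1 + β * P / (σsq * (‖w‖ ^ 2 + h ^ 2)) ≠ 0 := fun w => by positivity
  exact (contDiff_const.mul ((contDiff_const.add (contDiff_const.div
    (contDiff_const.mul ((contDiff_norm_sq ℝ).add contDiff_const)) hden)).log hsnr)).div_const _

end PerBitCost

theorem locational_cost_contDiffAt_general (B β P σsq h : ℝ)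
    (hB : 0 < B) (hβ : 0 < β) (hP : 0 < P) (hσ : 0 < σsq) (hh : 0 < h)
    (M : ℕ)
    (K : Set (EuclideanSpace ℝ (Fin 2))) (hK : IsCompact K)
    (ρ : EuclideanSpace ℝ (Fin 2) → ℝ) (hρc : Continuous ρ)
    (U : Fin M → EuclideanSpace ℝ (Fin 2)) (hU : Function.Injective U) :
    ContDiffAt ℝ 1
      (fun u : Fin M → EuclideanSpace ℝ (Fin 2) =>
        ∫ x in K, ρ x *
          ⨅ m, 1 / (B * Real.log (1 + β * P / (σsq * (‖u m - x‖ ^ 2 + h ^ 2)))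
            / Real.log 2))
      U := by
  have hψ : ContDiff ℝ 1 fun w : EuclideanSpace ℝ (Fin 2) => 1 / transmissionRate B β P σsq h w :=
    contDiff_const.div (contDiff_transmissionRate hβ hP hσ hh.ne')
      fun w => (transmissionRate_pos hB hβ hP hσ hh.ne' w).ne'
  have hmono : ∀ w w' : EuclideanSpace ℝ (Fin 2), ‖w‖ ≤ ‖w'‖ →
      1 / transmissionRate B β P σsq h w ≤ 1 / transmissionRate B β P σsq h w' :=
    fun w w' hw => one_div_le_one_div_of_le (transmissionRate_pos hB hβ hP hσ hh.ne' w')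
      (transmissionRate_le_of_norm_le hB hβ hP hσ hh.ne' hw)
  exact contDiffAt_integral_mul_ciInf hψ hmono (hρc.continuousOn.integrableOn_compact hK) hK hU

/-- The locational cost `F(u₁,…,u_M) = ∫_K ρ(x) · min_m ω(u_m, x) dx`, with per-bit
cost `ω(u,x) = 1/(B·log₂(1 + βP/(σ²(‖u-x‖² + h²))))` and altitude gap `h > 0`, is
continuously differentiable at every configuration with pairwise distinct
components. -/
theorem locational_cost_contDiffAt (B β P σsq h : ℝ)
    (hB : 0 < B) (hβ : 0 < β) (hP : 0 < P) (hσ : 0 < σsq) (hh : 0 < h)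
    (M : ℕ) (hM : 1 ≤ M)
    (K : Set (EuclideanSpace ℝ (Fin 2))) (hK : IsCompact K) (hKm : MeasurableSet K)
    (ρ : EuclideanSpace ℝ (Fin 2) → ℝ) (hρc : Continuous ρ) (hρ0 : ∀ x, 0 ≤ ρ x)
    (U : Fin M → EuclideanSpace ℝ (Fin 2)) (hU : Function.Injective U) :
    ContDiffAt ℝ 1
      (fun u : Fin M → EuclideanSpace ℝ (Fin 2) =>
        ∫ x in K, ρ x *
          ⨅ m, 1 / (B * Real.log (1 + β * P / (σsq * (‖u m - x‖ ^ 2 + h ^ 2)))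
            / Real.log 2))
      U :=
  locational_cost_contDiffAt_general B β P σsq h hB hβ hP hσ hh M K hK ρ hρc U hU
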